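/- arXiv:1607.07654 — 3 statements merged into one kernel-verified Lean document; each statement's English description precedes it below -/
import Mathlib

section
/- If there exists a strictly balanced s-uniform hypergraph with density ρ, then there exists a strictly balanced (s+1)-uniform hypergraph with the same density ρ. -/
open scoped Classical

/-- A finite `s`-uniform hypergraph on a vertex set of natural numbers. -/
structure SUHypergraph (s : ℕ) where
  V : Finset ℕ
  E : Finset (Finset ℕ)
  card_edges : ∀ e ∈ E, e.card = s
  edges_sub : ∀ e ∈ E, e ⊆ V

namespace SUHypergraph

/-- The density `|E|/|V|` of a hypergraph. -/
noncomputable def density {s : ℕ} (G : SUHypergraph s) : ℚ :=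
  (G.E.card : ℚ) / (G.V.card : ℚ)

/-- `G` is strictly balanced: every proper subhypergraph with at least one
vertex has strictly smaller density. -/
def StrictlyBalanced {s : ℕ} (G : SUHypergraph s) : Prop :=
  G.V.Nonempty ∧ ∀ H : SUHypergraph s, H.V ⊆ G.V → H.E ⊆ G.E → H.V.Nonempty →
    ¬(H.V = G.V ∧ H.E = G.E) → H.density < G.density

/-- The subhypergraph of `G` induced on the vertex set `S`. -/
def restrict {s : ℕ} (G : SUHypergraph s) (S : Finset ℕ) : SUHypergraph s where
  V := G.V ∩ S
  E := G.E.filter (fun e => e ⊆ S)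
  card_edges := fun e he => G.card_edges e (Finset.mem_filter.mp he).1
  edges_sub := fun e he a ha => Finset.mem_inter.mpr
    ⟨G.edges_sub e (Finset.mem_filter.mp he).1 ha, (Finset.mem_filter.mp he).2 ha⟩

/-- A cycle `(v 0, e 0, v 1, e 1, …, v (m-1), e (m-1), v m = v 0)` in `G`. -/
def IsCycle {s : ℕ} (G : SUHypergraph s) (m : ℕ) (v : ℕ → ℕ) (e : ℕ → Finset ℕ) : Prop :=
  0 < m ∧ v m = v 0 ∧ e m = e 0 ∧
  (∀ i < m, e i ∈ G.E) ∧ (∀ i < m, v i ∈ G.V) ∧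
  (∀ i < m, v i ≠ v (i + 1)) ∧ (∀ i < m, e i ≠ e (i + 1)) ∧
  (∀ i < m, v i ∈ e i ∧ v (i + 1) ∈ e i)

/-- `G` is connected: it is nonempty and any two vertices are joined by a
chain of edges. -/
def Connected {s : ℕ} (G : SUHypergraph s) : Prop :=
  G.V.Nonempty ∧ ∀ u ∈ G.V, ∀ w ∈ G.V,
    Relation.ReflTransGen (fun a b => ∃ e ∈ G.E, a ∈ e ∧ b ∈ e) u w

/-- A tree is a connected hypergraph without cycles. -/
def IsTree {s : ℕ} (G : SUHypergraph s) : Prop :=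
  G.Connected ∧ ¬ ∃ m v e, G.IsCycle m v e

/-- For a rooted pair: number of nonroot vertices minus `α` times the number of
edges with at least one nonroot vertex, for roots `S` in the hypergraph `K`. -/
noncomputable def exVal {s : ℕ} (α : ℝ) (S : Finset ℕ) (K : SUHypergraph s) : ℝ :=
  ((K.V \ S).card : ℝ) - ((K.E.filter (fun f => ¬ f ⊆ S)).card : ℝ) * α

/-- The rooted hypergraph `(S, K)` is dense: `v - e·α < 0`. -/
noncomputable def IsDense {s : ℕ} (α : ℝ) (S : Finset ℕ) (K : SUHypergraph s) : Prop :=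
  exVal α S K < 0

/-- The rooted hypergraph `(S, K)` is sparse: `v - e·α > 0`. -/
noncomputable def IsSparse {s : ℕ} (α : ℝ) (S : Finset ℕ) (K : SUHypergraph s) : Prop :=
  0 < exVal α S K

/-- `(R, K)` is rigid: every nailextension `(S, K)` with `R ⊆ S ⊊ V(K)` is dense. -/
noncomputable def Rigid {s : ℕ} (α : ℝ) (R : Finset ℕ) (K : SUHypergraph s) : Prop :=
  ∀ S : Finset ℕ, R ⊆ S → S ⊂ K.V → IsDense α S K

/-- `(R, K)` is safe: every subextension `(R, K|_S)` with `R ⊊ S ⊆ V(K)` is sparse. -/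
noncomputable def Safe {s : ℕ} (α : ℝ) (R : Finset ℕ) (K : SUHypergraph s) : Prop :=
  ∀ S : Finset ℕ, R ⊂ S → S ⊆ K.V → IsSparse α R (K.restrict S)

/-- `(R, K)` is minimally safe: safe, with no safe nailextension. -/
noncomputable def MinimallySafe {s : ℕ} (α : ℝ) (R : Finset ℕ) (K : SUHypergraph s) : Prop :=
  Safe α R K ∧ ¬ ∃ S : Finset ℕ, R ⊂ S ∧ S ⊂ K.V ∧ Safe α S K

/-- A rigid `t`-chain `x 0 ⊆ x 1 ⊆ … ⊆ x k` in `G`: each step adds at most `t`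
vertices and each `(x i, G|_{x (i+1)})` is rigid. -/
noncomputable def IsRigidChain {s : ℕ} (α : ℝ) (G : SUHypergraph s) (t k : ℕ)
    (x : ℕ → Finset ℕ) : Prop :=
  (∀ i < k, x i ⊆ x (i + 1)) ∧ (∀ i < k, (x (i + 1) \ x i).card ≤ t) ∧
  (∀ i ≤ k, x i ⊆ G.V) ∧ (∀ i < k, Rigid α (x i) (G.restrict (x (i + 1))))

/-- `C` is the `t`-closure of `X` in `G`: it is the endpoint of a rigid
`t`-chain starting at `X` and contains the endpoint of every such chain. -/
noncomputable def IsTClosure {s : ℕ} (α : ℝ) (G : SUHypergraph s) (t : ℕ)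
    (X C : Finset ℕ) : Prop :=
  (∃ k x, IsRigidChain α G t k x ∧ x 0 = X ∧ x k = C) ∧
  ∀ k' x', IsRigidChain α G t k' x' → x' 0 = X → x' k' ⊆ C

end SUHypergraph

open SUHypergraph

/-- The possible edges of an `s`-uniform hypergraph on `Fin n`. -/
def edgeCandidates (s n : ℕ) : Finset (Finset (Fin n)) :=
  Finset.univ.filter (fun e => e.card = s)

/-- The probability of the event `A` under the binomial random `s`-uniform
hypergraph `G^s(n,p)`: each of the `C(n,s)` possible edges appears
independently with probability `p`. -/
noncomputable def hyperProb (s n : ℕ) (p : ℝ) (A : Set (Finset (Finset (Fin n)))) : ℝ :=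
  ∑ E ∈ (edgeCandidates s n).powerset,
    if E ∈ A then p ^ E.card * (1 - p) ^ ((edgeCandidates s n).card - E.card) else 0

/-- The `s`-uniform hypergraph on vertex set `{0,…,n-1}` determined by an
edge set over `Fin n`. -/
noncomputable def ofEdges (s n : ℕ) (E : Finset (Finset (Fin n))) : SUHypergraph s where
  V := Finset.range n
  E := (E.filter (fun e => e.card = s)).image (fun e => e.image Fin.val)
  card_edges := by
    intro f hf
    simp only [Finset.mem_image, Finset.mem_filter] at hf
    obtain ⟨e, ⟨_, hcard⟩, rfl⟩ := hf
    rw [Finset.card_image_of_injective _ Fin.val_injective]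
    exact hcard
  edges_sub := by
    intro f hf a ha
    simp only [Finset.mem_image, Finset.mem_filter] at hf
    obtain ⟨e, _, rfl⟩ := hf
    simp only [Finset.mem_image] at ha
    obtain ⟨b, _, rfl⟩ := ha
    exact Finset.mem_range.mpr b.isLt


/-! Double the vertex set into an even and an odd copy of `G.V` and fix a vertex `u`. Every
edge `e` gives two edges: the even copy of `e` together with the odd copy of `u`, and the odd
copy of `e` together with the even copy of `u`. Vertices and edges both double, so the density
is unchanged. A subhypergraph with even part `A` and odd part `B` has at most `e(A) + e(B)`
edges, which by strict balance of `G` is at most `ρ (|A| + |B|)`, with equality only for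
`A, B ∈ {∅, V}`. The vertex `u` couples the two halves: the even edges need `u ∈ B` and the
odd edges need `u ∈ A`, so equality forces the whole doubled hypergraph. -/

open Finset

theorem Finset.card_eq_card_filter_add_card_filter_of_subset_map_union {α β : Type*}
    [DecidableEq β] {s : Finset β} {t₁ t₂ : Finset α} {f g : α ↪ β}
    (hs : s ⊆ t₁.map f ∪ t₂.map g) (hdisj : Disjoint (t₁.map f) (t₂.map g)) :
    s.card = (t₁.filter (f · ∈ s)).card + (t₂.filter (g · ∈ s)).card := by
  rw [← card_map f, ← card_map g, ← card_union_of_disjoint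
    (hdisj.mono (map_subset_map.2 (filter_subset _ _)) (map_subset_map.2 (filter_subset _ _)))]
  congr 1
  ext x
  constructor
  · intro hx
    rcases mem_union.1 (hs hx) with h | h <;> obtain ⟨a, ha, rfl⟩ := mem_map.1 h
    · exact mem_union_left _ (mem_map_of_mem _ (mem_filter.2 ⟨ha, hx⟩))
    · exact mem_union_right _ (mem_map_of_mem _ (mem_filter.2 ⟨ha, hx⟩))
  · intro hx
    rcases mem_union.1 hx with h | h <;> obtain ⟨a, ha, rfl⟩ := mem_map.1 h <;>
      exact (mem_filter.1 ha).2

def evenEmb : ℕ ↪ ℕ := ⟨fun v => 2 * v, fun a b h => by simpa using h⟩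

def oddEmb : ℕ ↪ ℕ := ⟨fun v => 2 * v + 1, fun a b h => by simpa using h⟩

@[simp] theorem evenEmb_apply (v : ℕ) : evenEmb v = 2 * v := rfl

@[simp] theorem oddEmb_apply (v : ℕ) : oddEmb v = 2 * v + 1 := rfl

theorem disjoint_map_evenEmb_map_oddEmb (S T : Finset ℕ) :
    Disjoint (S.map evenEmb) (T.map oddEmb) := by
  simp only [disjoint_left, mem_map, evenEmb_apply, oddEmb_apply]
  rintro _ ⟨a, -, rfl⟩ ⟨b, -, h⟩
  omega

theorem evenEmb_mem_insert_oddEmb_map {u v : ℕ} {e : Finset ℕ} :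
    evenEmb v ∈ insert (oddEmb u) (e.map evenEmb) ↔ v ∈ e := by
  simp only [mem_insert, mem_map, evenEmb_apply, oddEmb_apply]
  constructor
  · rintro (h | ⟨w, hw, h⟩)
    · omega
    · rwa [show v = w by omega]
  · exact fun hv => Or.inr ⟨v, hv, rfl⟩

theorem oddEmb_mem_insert_evenEmb_map {u v : ℕ} {e : Finset ℕ} :
    oddEmb v ∈ insert (evenEmb u) (e.map oddEmb) ↔ v ∈ e := by
  simp only [mem_insert, mem_map, evenEmb_apply, oddEmb_apply]
  constructor
  · rintro (h | ⟨w, hw, h⟩)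
    · omega
    · rwa [show v = w by omega]
  · exact fun hv => Or.inr ⟨v, hv, rfl⟩

def evenLift (u : ℕ) : Finset ℕ ↪ Finset ℕ :=
  ⟨fun e => insert (oddEmb u) (e.map evenEmb), fun e f h => by
    ext v
    have h : insert (oddEmb u) (e.map evenEmb) = insert (oddEmb u) (f.map evenEmb) := h
    rw [← evenEmb_mem_insert_oddEmb_map (u := u) (e := e), h, evenEmb_mem_insert_oddEmb_map]⟩

def oddLift (u : ℕ) : Finset ℕ ↪ Finset ℕ :=
  ⟨fun e => insert (evenEmb u) (e.map oddEmb), fun e f h => by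
    ext v
    have h : insert (evenEmb u) (e.map oddEmb) = insert (evenEmb u) (f.map oddEmb) := h
    rw [← oddEmb_mem_insert_evenEmb_map (u := u) (e := e), h, oddEmb_mem_insert_evenEmb_map]⟩

theorem evenLift_apply (u : ℕ) (e : Finset ℕ) :
    evenLift u e = insert (oddEmb u) (e.map evenEmb) := rfl

theorem oddLift_apply (u : ℕ) (e : Finset ℕ) :
    oddLift u e = insert (evenEmb u) (e.map oddEmb) := rfl

theorem card_evenLift (u : ℕ) (e : Finset ℕ) : (evenLift u e).card = e.card + 1 := by
  rw [evenLift_apply, card_insert_of_notMem, card_map]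
  simp only [mem_map, evenEmb_apply, oddEmb_apply, not_exists, not_and]
  omega

theorem card_oddLift (u : ℕ) (e : Finset ℕ) : (oddLift u e).card = e.card + 1 := by
  rw [oddLift_apply, card_insert_of_notMem, card_map]
  simp only [mem_map, evenEmb_apply, oddEmb_apply, not_exists, not_and]
  omega

theorem evenLift_subset_iff {u : ℕ} {e S : Finset ℕ} :
    evenLift u e ⊆ S ↔ oddEmb u ∈ S ∧ ∀ v ∈ e, evenEmb v ∈ S := by
  simp [evenLift_apply, subset_iff]

theorem oddLift_subset_iff {u : ℕ} {e S : Finset ℕ} :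
    oddLift u e ⊆ S ↔ evenEmb u ∈ S ∧ ∀ v ∈ e, oddEmb v ∈ S := by
  simp [oddLift_apply, subset_iff]

/-- The odd lift of `f` has an odd vertex other than `oddEmb u`, which no even lift has. -/
theorem evenLift_ne_oddLift {u : ℕ} (e : Finset ℕ) {f : Finset ℕ} (hf : 1 < f.card) :
    evenLift u e ≠ oddLift u f := by
  obtain ⟨v, hv, hvu⟩ := exists_mem_ne hf u
  intro h
  have : oddEmb v ∈ evenLift u e := h ▸ (oddLift_subset_iff.1 subset_rfl).2 v hv
  simp only [evenLift_apply, mem_insert, mem_map, evenEmb_apply, oddEmb_apply] at this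
  omega

namespace SUHypergraph

variable {s : ℕ}

theorem density_mul_card_V (G : SUHypergraph s) (hG : G.V.Nonempty) :
    G.density * G.V.card = G.E.card :=
  div_mul_cancel₀ _ (by exact_mod_cast hG.card_pos.ne')

theorem restrict_V_of_subset (G : SUHypergraph s) {S : Finset ℕ} (hS : S ⊆ G.V) :
    (G.restrict S).V = S :=
  inter_eq_right.2 hS

theorem StrictlyBalanced.card_restrict_E_lt {G : SUHypergraph s} (hG : G.StrictlyBalanced)
    {S : Finset ℕ} (hS : S ⊆ G.V) (hSne : S.Nonempty) (hSV : S ≠ G.V) :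
    ((G.restrict S).E.card : ℚ) < G.density * S.card := by
  have h := hG.2 (G.restrict S) inter_subset_left (filter_subset _ _)
    (by rwa [G.restrict_V_of_subset hS]) (fun h => hSV (by rw [← h.1, G.restrict_V_of_subset hS]))
  rwa [density, G.restrict_V_of_subset hS, div_lt_iff₀ (by exact_mod_cast hSne.card_pos)] at h

theorem StrictlyBalanced.card_restrict_E_le {G : SUHypergraph s} (hG : G.StrictlyBalanced)
    (hs : s ≠ 0) {S : Finset ℕ} (hS : S ⊆ G.V) :
    ((G.restrict S).E.card : ℚ) ≤ G.density * S.card := by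
  rcases S.eq_empty_or_nonempty with rfl | hSne
  · have : (G.restrict ∅).E = ∅ := filter_eq_empty_iff.2 fun e he he0 =>
      hs (by rw [← G.card_edges e he, subset_empty.1 he0, card_empty])
    simp [this]
  by_cases hSV : S = G.V
  · subst hSV
    rw [G.density_mul_card_V hG.1]
    exact_mod_cast card_filter_le _ _
  · exact (hG.card_restrict_E_lt hS hSne hSV).le

theorem StrictlyBalanced.eq_of_density_mul_card_le {G : SUHypergraph s}
    (hG : G.StrictlyBalanced) {A : Finset ℕ} (hA : A ⊆ G.V) (hAne : A.Nonempty)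
    {F : Finset (Finset ℕ)} (hF : F ⊆ (G.restrict A).E) (h : G.density * A.card ≤ F.card) :
    A = G.V ∧ F = G.E := by
  have hFA : (F.card : ℚ) ≤ (G.restrict A).E.card := by exact_mod_cast card_le_card hF
  have hAV : A = G.V := by
    by_contra hAV
    linarith [hG.card_restrict_E_lt hA hAne hAV]
  subst hAV
  refine ⟨rfl, eq_of_subset_of_card_le (hF.trans (filter_subset _ _)) ?_⟩
  rw [G.density_mul_card_V hG.1] at h
  exact_mod_cast h

theorem StrictlyBalanced.card_add_card_lt_or {G : SUHypergraph s} (hG : G.StrictlyBalanced)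
    (hs : s ≠ 0) (hm : G.E.Nonempty) {A B : Finset ℕ} (hA : A ⊆ G.V) (hB : B ⊆ G.V)
    (hAB : A.Nonempty ∨ B.Nonempty) {E₁ E₂ : Finset (Finset ℕ)}
    (hE₁ : E₁ ⊆ (G.restrict A).E) (hE₂ : E₂ ⊆ (G.restrict B).E)
    (hE₁B : E₁.Nonempty → B.Nonempty) (hE₂A : E₂.Nonempty → A.Nonempty) :
    (E₁.card + E₂.card : ℚ) < G.density * (A.card + B.card) ∨
      (A = G.V ∧ B = G.V ∧ E₁ = G.E ∧ E₂ = G.E) := by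
  have h₁ : (E₁.card : ℚ) ≤ G.density * A.card :=
    (Nat.cast_le.2 (card_le_card hE₁)).trans (hG.card_restrict_E_le hs hA)
  have h₂ : (E₂.card : ℚ) ≤ G.density * B.card :=
    (Nat.cast_le.2 (card_le_card hE₂)).trans (hG.card_restrict_E_le hs hB)
  refine or_iff_not_imp_left.2 fun hlt => ?_
  have hA_full := fun hAne => hG.eq_of_density_mul_card_le hA hAne hE₁ (by linarith)
  have hB_full := fun hBne => hG.eq_of_density_mul_card_le hB hBne hE₂ (by linarith)
  have hAne : A.Nonempty := by
    rcases hAB with hAne | hBne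
    · exact hAne
    · exact hE₂A ((hB_full hBne).2 ▸ hm)
  have hBne : B.Nonempty := hE₁B ((hA_full hAne).2 ▸ hm)
  exact ⟨(hA_full hAne).1, (hB_full hBne).1, (hA_full hAne).2, (hB_full hBne).2⟩

def double (G : SUHypergraph s) (u : ℕ) (hu : u ∈ G.V) : SUHypergraph (s + 1) where
  V := G.V.map evenEmb ∪ G.V.map oddEmb
  E := G.E.map (evenLift u) ∪ G.E.map (oddLift u)
  card_edges := by
    simp only [mem_union, mem_map]
    rintro _ (⟨e, he, rfl⟩ | ⟨e, he, rfl⟩)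
    · rw [card_evenLift, G.card_edges e he]
    · rw [card_oddLift, G.card_edges e he]
  edges_sub := by
    simp only [mem_union, mem_map]
    rintro _ (⟨e, he, rfl⟩ | ⟨e, he, rfl⟩)
    · exact evenLift_subset_iff.2 ⟨mem_union_right _ (mem_map_of_mem _ hu),
        fun v hv => mem_union_left _ (mem_map_of_mem _ (G.edges_sub e he hv))⟩
    · exact oddLift_subset_iff.2 ⟨mem_union_left _ (mem_map_of_mem _ hu),
        fun v hv => mem_union_right _ (mem_map_of_mem _ (G.edges_sub e he hv))⟩

theorem disjoint_map_evenLift_map_oddLift (G : SUHypergraph s) (hs : 2 ≤ s) (u : ℕ) :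
    Disjoint (G.E.map (evenLift u)) (G.E.map (oddLift u)) := by
  simp only [disjoint_left, mem_map]
  rintro _ ⟨e, -, rfl⟩ ⟨f, hf, h⟩
  exact evenLift_ne_oddLift e (G.card_edges f hf ▸ hs) h.symm

variable (G : SUHypergraph s) {u : ℕ} (hu : u ∈ G.V)

theorem card_double_V : (G.double u hu).V.card = 2 * G.V.card := by
  rw [double, card_union_of_disjoint (disjoint_map_evenEmb_map_oddEmb _ _), card_map, card_map,
    two_mul]

theorem card_double_E (hs : 2 ≤ s) : (G.double u hu).E.card = 2 * G.E.card := by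
  rw [double, card_union_of_disjoint (G.disjoint_map_evenLift_map_oddLift hs u), card_map,
    card_map, two_mul]

theorem density_double (hs : 2 ≤ s) : (G.double u hu).density = G.density := by
  rw [density, density, card_double_V, card_double_E _ _ hs]
  push_cast
  exact mul_div_mul_left _ _ two_ne_zero

variable {G}

theorem StrictlyBalanced.double (hs : 2 ≤ s) (hG : G.StrictlyBalanced) (hm : G.E.Nonempty) :
    (G.double u hu).StrictlyBalanced := by
  refine ⟨⟨evenEmb u, mem_union_left _ (mem_map_of_mem _ hu)⟩, fun K hKV hKE hKne hKH => ?_⟩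
  set A := G.V.filter (evenEmb · ∈ K.V)
  set B := G.V.filter (oddEmb · ∈ K.V)
  set E₁ := G.E.filter (evenLift u · ∈ K.E)
  set E₂ := G.E.filter (oddLift u · ∈ K.E)
  have hVcard : K.V.card = A.card + B.card :=
    card_eq_card_filter_add_card_filter_of_subset_map_union hKV
      (disjoint_map_evenEmb_map_oddEmb _ _)
  have hEcard : K.E.card = E₁.card + E₂.card :=
    card_eq_card_filter_add_card_filter_of_subset_map_union hKE
      (G.disjoint_map_evenLift_map_oddLift hs u)
  have hE₁ : E₁ ⊆ (G.restrict A).E := fun e he => by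
    obtain ⟨he, heK⟩ := mem_filter.1 he
    exact mem_filter.2 ⟨he, fun v hv => mem_filter.2
      ⟨G.edges_sub e he hv, (evenLift_subset_iff.1 (K.edges_sub _ heK)).2 v hv⟩⟩
  have hE₂ : E₂ ⊆ (G.restrict B).E := fun e he => by
    obtain ⟨he, heK⟩ := mem_filter.1 he
    exact mem_filter.2 ⟨he, fun v hv => mem_filter.2
      ⟨G.edges_sub e he hv, (oddLift_subset_iff.1 (K.edges_sub _ heK)).2 v hv⟩⟩
  have hE₁B : E₁.Nonempty → B.Nonempty := fun ⟨_, he⟩ =>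
    ⟨u, mem_filter.2 ⟨hu, (evenLift_subset_iff.1 (K.edges_sub _ (mem_filter.1 he).2)).1⟩⟩
  have hE₂A : E₂.Nonempty → A.Nonempty := fun ⟨_, he⟩ =>
    ⟨u, mem_filter.2 ⟨hu, (oddLift_subset_iff.1 (K.edges_sub _ (mem_filter.1 he).2)).1⟩⟩
  have hAB : A.Nonempty ∨ B.Nonempty := by
    rw [← card_pos, ← card_pos, ← Nat.add_pos_iff_pos_or_pos, ← hVcard]
    exact hKne.card_pos
  rw [G.density_double hu hs, density, div_lt_iff₀ (by exact_mod_cast hKne.card_pos), hVcard,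
    hEcard, Nat.cast_add, Nat.cast_add]
  refine (hG.card_add_card_lt_or (A := A) (B := B) (by omega) hm (filter_subset _ _)
    (filter_subset _ _) hAB hE₁ hE₂ hE₁B hE₂A).resolve_right ?_
  rintro ⟨hA, hB, h₁, h₂⟩
  refine hKH ⟨?_, ?_⟩
  · exact eq_of_subset_of_card_le hKV (by rw [hVcard, hA, hB, card_double_V, two_mul])
  · exact eq_of_subset_of_card_le hKE (by rw [hEcard, h₁, h₂, card_double_E _ _ hs, two_mul])

end SUHypergraph

/-- If there exists a strictly balanced `s`-uniform hypergraph with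
density `ρ`, then there exists a strictly balanced `(s+1)`-uniform hypergraph
with the same density `ρ`. -/
theorem stmt0 (s : ℕ) (hs : 2 ≤ s) (ρ : ℚ) (hρ : 0 < ρ)
    (h : ∃ G : SUHypergraph s, G.StrictlyBalanced ∧ G.density = ρ) :
    ∃ H : SUHypergraph (s + 1), H.StrictlyBalanced ∧ H.density = ρ := by
  obtain ⟨G, hG, rfl⟩ := h
  obtain ⟨u, hu⟩ := hG.1
  have hm : G.E.Nonempty := by
    rw [nonempty_iff_ne_empty]
    intro hE
    simp [density, hE] at hρ
  exact ⟨G.double u hu, hG.double hu hs hm, G.density_double hu hs⟩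
end

section
/- Let s ≥ 3, m ≥ 3, and n = (s−1)m − r with r ∈ {0,1,…,m−1}. Define the s-uniform hypergraph G on vertex set Z/nZ with m edges constructed sequentially as follows: the first edge is {1,…,s}; if the k-th edge is {x, x+1, …, x+s−1}, then the (k+1)-st edge is {x+s−2, …, x+2s−3} if k+1 ∈ I and {x+s−1, …, x+2s−2} otherwise, where I = {⌊k·m/r⌋ : k = 1,…,r}. Then G is strictly balanced with density m/n. -/
open scoped Classical

open SUHypergraph

/-- The index set `I = {⌊k·m/r⌋ : k = 1,…,r}` (empty when `r = 0`). -/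
def Iset (m r : ℕ) : Finset ℕ := (Finset.Icc 1 r).image (fun k => k * m / r)

/-- Starting vertex of the `k`-th edge (`0`-indexed) of the circular
construction: the first edge starts at `1`, and each subsequent edge starts
`s-2` further if its (1-indexed) number lies in `I`, else `s-1` further. -/
def circStart (I : Finset ℕ) (s : ℕ) : ℕ → ℕ
  | 0 => 1
  | k + 1 => circStart I s k + (if k + 2 ∈ I then s - 2 else s - 1)

/-- The `k`-th edge (`0`-indexed) of the circular construction: `s`
consecutive vertices modulo `n` starting at `circStart I s k`. -/
def circEdge (I : Finset ℕ) (s n k : ℕ) : Finset ℕ :=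
  (Finset.range s).image (fun j => (circStart I s k + j) % n)

/-!
Up to a rotation of the cycle, the `k`-th edge starts at `⌊(k + 2) n / m⌋`: the edges are `m`
arcs of length `s` placed at the equally spaced positions `a j = ⌊(j n + K) / m⌋` of the lifted
cycle, with `a (j + m) = a j + n`. Since `n / m ≤ s - 1`, the slot `[a j, a (j + 1))` lies
inside the `j`-th arc. If `V` contains the arcs of a proper nonempty set `T` of indices, it
contains every slot of an arc of `T` and, at the end of each run of `T`, the first vertex of the
following slot. Writing `m a j = j n + K - ρ j` with `0 ≤ ρ j < m`, a full slot has `m` times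
its length equal to `n + ρ j - ρ (j + 1)`; these defects telescope around the cycle, and the
bounded range of `ρ` lets each run end pay for them with a unit to spare. Hence
`m |V| > |T| n`, which is strict balance with density `m / n`.
-/

theorem mem_Iset_iff {m r v : ℕ} (hr : r < m) (hv : 1 ≤ v) (hvm : v ≤ m) :
    v ∈ Iset m r ↔ ∃ t, v * r ≤ t * m ∧ t * m < v * r + r := by
  rcases Nat.eq_zero_or_pos r with rfl | hr0
  · simp [Iset]
  simp only [Iset, Finset.mem_image, Finset.mem_Icc]
  constructor
  · rintro ⟨t, -, rfl⟩
    refine ⟨t, Nat.div_mul_le_self _ _, ?_⟩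
    have := Nat.lt_div_mul_add (a := t * m) hr0
    linarith [Nat.add_mul (t * m / r) 1 r]
  · rintro ⟨t, hlo, hhi⟩
    have ht : t * m / r = v := by
      apply Nat.div_eq_of_lt_le <;> linarith
    refine ⟨t, ⟨?_, ?_⟩, ht⟩
    · exact Nat.pos_of_ne_zero (by rintro rfl; nlinarith)
    · by_contra! h
      nlinarith

theorem succ_mul_div_add_ite {s m r n v : ℕ} (hs : 2 ≤ s) (hr : r < m)
    (hnr : n + r = (s - 1) * m) (hv : 1 ≤ v) (hvm : v ≤ m) :
    (v + 1) * n / m + (if v ∈ Iset m r then 1 else 0) = v * n / m + (s - 1) := by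
  have hm : 0 < m := by omega
  set q := v * n / m
  set ρ := v * n % m
  have hq : m * q + ρ = v * n := Nat.div_add_mod _ _
  have hρ : ρ < m := Nat.mod_lt _ hm
  obtain ⟨t₀, ht₀⟩ : m ∣ v * r + ρ := by
    refine (Nat.dvd_add_right (dvd_mul_right m q)).mp ⟨v * (s - 1), ?_⟩
    linear_combination hq + v * hnr
  -- `v * r + ρ` is the least multiple of `m` that is at least `v * r`.
  have hmem : v ∈ Iset m r ↔ ρ < r := by
    rw [mem_Iset_iff hr hv hvm]
    constructor
    · rintro ⟨t, hlo, hhi⟩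
      obtain rfl : t = t₀ := le_antisymm (by nlinarith) (by nlinarith)
      linarith [mul_comm m t]
    · intro h
      exact ⟨t₀, by linarith [mul_comm m t₀], by linarith [mul_comm m t₀]⟩
  have hsucc : (v + 1) * n = m * q + ρ + n := by rw [add_one_mul, hq]
  have hsplit : (s - 1) * m = (s - 2) * m + m := by
    rw [← add_one_mul]; congr 1; omega
  rw [hsucc]
  split_ifs with h
  · have : (m * q + ρ + n) / m = q + (s - 2) := by
      apply Nat.div_eq_of_lt_le <;> nlinarith [hmem.mp h]
    omega
  · have : (m * q + ρ + n) / m = q + (s - 1) := by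
      apply Nat.div_eq_of_lt_le <;> nlinarith [hmem.not.mp h]
    omega

theorem circStart_add_two_mul_div {s m r n : ℕ} (hs : 2 ≤ s) (hr : r < m)
    (hnr : n + r = (s - 1) * m) {k : ℕ} (hk : k < m) :
    circStart (Iset m r) s k + 2 * n / m = (k + 2) * n / m + 1 := by
  induction k with
  | zero => simp only [circStart]; ring_nf
  | succ k ih =>
    have hstep := succ_mul_div_add_ite (v := k + 2) hs hr hnr (by omega) (by omega)
    have := ih (by omega)
    simp only [circStart, show k + 1 + 2 = k + 2 + 1 by ring]
    split_ifs at hstep ⊢ <;> omega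

def spacedStart (n m K j : ℕ) : ℕ := (j * n + K) / m

theorem circStart_eq_spacedStart {s m r n : ℕ} (hs : 2 ≤ s) (hr : r < m)
    (hnr : n + r = (s - 1) * m) {k : ℕ} (hk : k < m) :
    circStart (Iset m r) s k = spacedStart n m (m + 2 * n % m) k := by
  have hm : 0 < m := by omega
  have h := circStart_add_two_mul_div hs hr hnr hk
  have hsum : k * n + (m + 2 * n % m) + m * (2 * n / m) = (k + 2) * n + m := by
    have := Nat.div_add_mod (2 * n) m
    linarith [add_mul k 2 n]
  have := congrArg (· / m) hsum
  simp only [Nat.add_mul_div_left _ _ hm, Nat.add_div_right _ hm] at this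
  unfold spacedStart
  omega

def cycleArc (n s x : ℕ) : Finset ℕ := (Finset.range s).image (fun i => (x + i) % n)

section CycleArc

variable {n s x : ℕ}

theorem mod_mem_cycleArc {z : ℕ} (hxz : x ≤ z) (hz : z < x + s) : z % n ∈ cycleArc n s x :=
  Finset.mem_image.mpr ⟨z - x, Finset.mem_range.mpr (by omega), by rw [Nat.add_sub_cancel' hxz]⟩

theorem mod_mem_cycleArc_iff (hsn : s ≤ n) {z : ℕ} (hxz : x ≤ z) (hz : z < x + n) :
    z % n ∈ cycleArc n s x ↔ z < x + s := by
  refine ⟨fun h => ?_, mod_mem_cycleArc hxz⟩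
  obtain ⟨i, hi, hiz⟩ := Finset.mem_image.mp h
  rw [Finset.mem_range] at hi
  have := Nat.mod_injOn_Ico x n (by simp; omega) (by simp; omega) hiz
  omega

theorem cycleArc_add_mul (x q : ℕ) : cycleArc n s (x + q * n) = cycleArc n s x := by
  simp only [cycleArc, Nat.add_right_comm x (q * n), Nat.add_mul_mod_self_right]

theorem cycleArc_ne {y : ℕ} (hs : 0 < s) (hsn : s < n) (hxy : x < y) (hyx : y < x + n) :
    cycleArc n s x ≠ cycleArc n s y := by
  intro h
  by_cases hys : y < x + s
  · have hprev : (y - 1 + n) % n ∈ cycleArc n s y := by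
      rw [h.symm, Nat.add_mod_right]
      exact mod_mem_cycleArc (by omega) (by omega)
    rw [mod_mem_cycleArc_iff hsn.le (by omega) (by omega)] at hprev
    omega
  · have hy : y % n ∈ cycleArc n s x := by
      rw [h]
      exact mod_mem_cycleArc le_rfl (by omega)
    rw [mod_mem_cycleArc_iff hsn.le hxy.le hyx] at hy
    exact hys hy

end CycleArc

section SpacedStart

variable {n m K : ℕ}

theorem mul_spacedStart_add_mod (j : ℕ) :
    m * spacedStart n m K j + (j * n + K) % m = j * n + K :=
  Nat.div_add_mod _ _

theorem spacedStart_add_mul (hm : 0 < m) (j q : ℕ) :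
    spacedStart n m K (j + q * m) = spacedStart n m K j + q * n := by
  unfold spacedStart
  rw [show (j + q * m) * n + K = j * n + K + q * n * m by ring, Nat.add_mul_div_right _ _ hm]

theorem cycleArc_spacedStart_mod (hm : 0 < m) (s j : ℕ) :
    cycleArc n s (spacedStart n m K j) = cycleArc n s (spacedStart n m K (j % m)) := by
  conv_lhs => rw [← Nat.mod_add_div' j m, spacedStart_add_mul hm, cycleArc_add_mul]

theorem spacedStart_lt_succ (hm : 0 < m) (hmn : m ≤ n) (j : ℕ) :
    spacedStart n m K j < spacedStart n m K (j + 1) := by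
  unfold spacedStart
  calc (j * n + K) / m < (j * n + K) / m + 1 := Nat.lt_succ_self _
    _ = (j * n + K + m) / m := (Nat.add_div_right _ hm).symm
    _ ≤ ((j + 1) * n + K) / m := Nat.div_le_div_right (by rw [add_one_mul]; omega)

theorem spacedStart_strictMono (hm : 0 < m) (hmn : m ≤ n) : StrictMono (spacedStart n m K) :=
  strictMono_nat_of_lt_succ (spacedStart_lt_succ hm hmn)

theorem spacedStart_succ_le {c : ℕ} (hm : 0 < m) (hnc : n ≤ c * m) (j : ℕ) :
    spacedStart n m K (j + 1) ≤ spacedStart n m K j + c := by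
  unfold spacedStart
  calc ((j + 1) * n + K) / m ≤ (j * n + K + c * m) / m :=
        Nat.div_le_div_right (by rw [add_one_mul]; omega)
    _ = (j * n + K) / m + c := Nat.add_mul_div_right _ _ hm

theorem cycleArc_spacedStart_injOn {s : ℕ} (hm : 0 < m) (hmn : m ≤ n) (hs : 0 < s)
    (hsn : s < n) : Set.InjOn (fun j => cycleArc n s (spacedStart n m K j)) (Finset.range m) := by
  have hmono := spacedStart_strictMono (K := K) hm hmn
  have hne : ∀ j j', j < j' → j' < m →
      cycleArc n s (spacedStart n m K j) ≠ cycleArc n s (spacedStart n m K j') := by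
    intro j j' hjj' hj'
    refine cycleArc_ne hs hsn (hmono hjj') ?_
    have := hmono (show j' < j + 1 * m by omega)
    rwa [spacedStart_add_mul hm, one_mul] at this
  intro j hj j' hj' h
  simp only [Finset.coe_range, Set.mem_Iio] at hj hj'
  by_contra hjj'
  rcases Nat.lt_or_gt_of_ne hjj' with hlt | hgt
  · exact hne j j' hlt hj' h
  · exact hne j' j hgt hj h.symm

end SpacedStart

theorem sum_card_filter_Ico_consecutive {f : ℕ → ℕ} (hf : Monotone f) (P : ℕ → Prop)
    [DecidablePred P] (k : ℕ) :
    ∑ i ∈ Finset.range k, ((Finset.Ico (f i) (f (i + 1))).filter P).card =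
      ((Finset.Ico (f 0) (f k)).filter P).card := by
  induction k with
  | zero => simp
  | succ k ih =>
    rw [Finset.sum_range_succ, ih, ← Finset.card_union_of_disjoint
      (Finset.disjoint_filter_filter (Finset.Ico_disjoint_Ico_consecutive _ _ _)),
      ← Finset.filter_union, Finset.Ico_union_Ico_eq_Ico (hf (Nat.zero_le k)) (hf k.le_succ)]

section SlotCounting

variable {n m K s : ℕ} {T V : Finset ℕ}

def slotCount (n m K : ℕ) (V : Finset ℕ) (j : ℕ) : ℕ :=
  ((Finset.Ico (spacedStart n m K j) (spacedStart n m K (j + 1))).filter (· % n ∈ V)).card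

/-- `((j + 1) * n + K) % m` is the rounding defect `ρ (j + 1)` of the start `a (j + 1)`. -/
def slotPotential (n m K : ℕ) (T : Finset ℕ) (j : ℕ) : ℤ :=
  if j % m ∈ T then (n : ℤ) - (((j + 1) * n + K) % m : ℕ) else 0

theorem sum_slotCount_le (hm : 0 < m) (hmn : m ≤ n) :
    ∑ e ∈ Finset.range m, slotCount n m K V (e + 1) ≤ V.card := by
  have hmono : Monotone fun e => spacedStart n m K (e + 1) :=
    (spacedStart_strictMono hm hmn).monotone.comp (fun _ _ h => Nat.add_le_add_right h 1)
  have htop : spacedStart n m K (m + 1) = spacedStart n m K 1 + n := by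
    simpa [add_comm] using spacedStart_add_mul (K := K) hm 1 1
  simp only [slotCount]
  rw [sum_card_filter_Ico_consecutive hmono, zero_add, htop]
  refine Finset.card_le_card_of_injOn (· % n) (fun x hx => (Finset.mem_filter.mp hx).2) ?_
  exact (Nat.mod_injOn_Ico _ n).mono fun x hx => (Finset.mem_filter.mp hx).1

theorem mod_mem_of_arc_subset (hm : 0 < m)
    (hsub : ∀ j ∈ T, cycleArc n s (spacedStart n m K j) ⊆ V) {j x : ℕ} (hj : j % m ∈ T)
    (hx : spacedStart n m K j ≤ x) (hxs : x < spacedStart n m K j + s) :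
    x % n ∈ V :=
  hsub _ hj (cycleArc_spacedStart_mod hm s j ▸ mod_mem_cycleArc hx hxs)

theorem le_mul_slotCount (hm : 0 < m) (hmn : m ≤ n) (hns : n ≤ (s - 1) * m)
    (hsub : ∀ j ∈ T, cycleArc n s (spacedStart n m K j) ⊆ V) (e : ℕ) :
    (if e % m ∈ T then (n : ℤ) else 0)
        + (slotPotential n m K T (e + 1) - slotPotential n m K T e)
        + (if e % m ∈ T ∧ (e + 1) % m ∉ T then 1 else 0)
      ≤ m * slotCount n m K V (e + 1) := by
  have hid : ∀ j, (m : ℤ) * spacedStart n m K j + ((j * n + K) % m : ℕ) = j * n + K :=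
    fun j => by exact_mod_cast mul_spacedStart_add_mod j
  have hstep : ∀ j, spacedStart n m K (j + 1) < spacedStart n m K j + s := fun j => by
    have := spacedStart_succ_le (K := K) hm hns j
    have := spacedStart_lt_succ (K := K) hm hmn j
    omega
  unfold slotPotential
  by_cases hnext : (e + 1) % m ∈ T
  · have hfull : slotCount n m K V (e + 1) =
        spacedStart n m K (e + 1 + 1) - spacedStart n m K (e + 1) := by
      rw [slotCount, Finset.filter_true_of_mem, Nat.card_Ico]
      intro x hx
      rw [Finset.mem_Ico] at hx
      exact mod_mem_of_arc_subset hm hsub hnext hx.1 (hx.2.trans (hstep _))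
    rw [hfull, Nat.cast_sub (spacedStart_lt_succ hm hmn _).le]
    have hgap : (m : ℤ) * spacedStart n m K (e + 1 + 1) + (((e + 1 + 1) * n + K) % m : ℕ) =
        m * spacedStart n m K (e + 1) + (((e + 1) * n + K) % m : ℕ) + n := by
      have h1 := hid (e + 1)
      have h2 := hid (e + 1 + 1)
      push_cast at h1 h2 ⊢
      linarith
    have hρ₀ : (0 : ℤ) ≤ (((e + 1) * n + K) % m : ℕ) := Nat.cast_nonneg _
    split_ifs <;> first | tauto | linarith
  · by_cases hcur : e % m ∈ T
    · have hone : 1 ≤ slotCount n m K V (e + 1) := by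
        refine Finset.card_pos.mpr
          ⟨spacedStart n m K (e + 1), Finset.mem_filter.mpr ⟨?_, ?_⟩⟩
        · exact Finset.mem_Ico.mpr ⟨le_rfl, spacedStart_lt_succ hm hmn _⟩
        · exact mod_mem_of_arc_subset hm hsub hcur (spacedStart_lt_succ hm hmn e).le (hstep e)
      have hρ : (((e + 1) * n + K) % m : ℕ) < (m : ℤ) := by exact_mod_cast Nat.mod_lt _ hm
      simp only [hnext, hcur, if_true, if_false, not_false_eq_true, and_self]
      nlinarith
    · simp only [hnext, hcur, if_false, false_and]
      positivity

theorem slotPotential_periodic : slotPotential n m K T m = slotPotential n m K T 0 := by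
  simp only [slotPotential, Nat.mod_self, Nat.zero_mod, zero_add, one_mul,
    show (m + 1) * n + K = n + K + n * m by ring, Nat.add_mul_mod_self_right]

theorem filter_range_mod_mem (hT : T ⊆ Finset.range m) :
    (Finset.range m).filter (fun e => e % m ∈ T) = T := by
  ext e
  simp only [Finset.mem_filter, Finset.mem_range]
  constructor
  · rintro ⟨he, hT'⟩
    rwa [Nat.mod_eq_of_lt he] at hT'
  · intro he
    have := Finset.mem_range.mp (hT he)
    exact ⟨this, by rwa [Nat.mod_eq_of_lt this]⟩

theorem card_mul_add_card_boundary_le (hm : 0 < m) (hmn : m ≤ n) (hns : n ≤ (s - 1) * m)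
    (hT : T ⊆ Finset.range m) (hsub : ∀ j ∈ T, cycleArc n s (spacedStart n m K j) ⊆ V) :
    (T.card * n + ((Finset.range m).filter (fun e => e % m ∈ T ∧ (e + 1) % m ∉ T)).card : ℤ)
      ≤ m * V.card := by
  calc _ = ∑ e ∈ Finset.range m, ((if e % m ∈ T then (n : ℤ) else 0)
          + (slotPotential n m K T (e + 1) - slotPotential n m K T e)
          + (if e % m ∈ T ∧ (e + 1) % m ∉ T then 1 else 0)) := by
        rw [Finset.sum_add_distrib, Finset.sum_add_distrib, Finset.sum_range_sub,
          slotPotential_periodic, sub_self, add_zero, Finset.sum_boole, ← Finset.sum_filter,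
          filter_range_mod_mem hT, Finset.sum_const, nsmul_eq_mul]
    _ ≤ ∑ e ∈ Finset.range m, (m : ℤ) * slotCount n m K V (e + 1) :=
        Finset.sum_le_sum fun e _ => le_mul_slotCount hm hmn hns hsub e
    _ ≤ m * V.card := by
        rw [← Finset.mul_sum]
        exact mul_le_mul_of_nonneg_left (by exact_mod_cast sum_slotCount_le hm hmn) (by positivity)

theorem exists_mem_succ_mod_not_mem (hT : T ⊆ Finset.range m) (hne : T.Nonempty)
    (hT' : T ≠ Finset.range m) : ∃ e ∈ Finset.range m, e % m ∈ T ∧ (e + 1) % m ∉ T := by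
  by_contra! hclosed
  obtain ⟨j₀, hj₀⟩ := hne
  have hj₀m := Finset.mem_range.mp (hT hj₀)
  have hall : ∀ i, (j₀ + i) % m ∈ T := by
    intro i
    induction i with
    | zero => rwa [add_zero, Nat.mod_eq_of_lt hj₀m]
    | succ i ih =>
      have := hclosed ((j₀ + i) % m) (Finset.mem_range.mpr (Nat.mod_lt _ (by omega)))
        (by rwa [Nat.mod_mod])
      rwa [Nat.mod_add_mod] at this
  refine hT' (Finset.Subset.antisymm hT fun p hp => ?_)
  have hpm := Finset.mem_range.mp hp
  have := hall (p + m - j₀)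
  rwa [show j₀ + (p + m - j₀) = p + m by omega, Nat.add_mod_right, Nat.mod_eq_of_lt hpm] at this

theorem card_mul_lt_of_ne_range (hm : 0 < m) (hmn : m ≤ n) (hns : n ≤ (s - 1) * m)
    (hT : T ⊆ Finset.range m) (hT' : T ≠ Finset.range m) (hV : V.Nonempty)
    (hsub : ∀ j ∈ T, cycleArc n s (spacedStart n m K j) ⊆ V) :
    T.card * n < m * V.card := by
  rcases T.eq_empty_or_nonempty with rfl | hne
  · simpa using Nat.mul_pos hm (Finset.card_pos.mpr hV)
  obtain ⟨e, he, hbd⟩ := exists_mem_succ_mod_not_mem hT hne hT'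
  have hB : 0 < ((Finset.range m).filter (fun e => e % m ∈ T ∧ (e + 1) % m ∉ T)).card :=
    Finset.card_pos.mpr ⟨e, Finset.mem_filter.mpr ⟨he, hbd⟩⟩
  have := card_mul_add_card_boundary_le hm hmn hns hT hsub
  zify
  linarith

theorem le_card_of_forall_arc_subset (hm : 0 < m) (hmn : m ≤ n) (hns : n ≤ (s - 1) * m)
    (hsub : ∀ j < m, cycleArc n s (spacedStart n m K j) ⊆ V) : n ≤ V.card := by
  have h := card_mul_add_card_boundary_le hm hmn hns (T := Finset.range m) subset_rfl
    fun j hj => hsub j (Finset.mem_range.mp hj)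
  rw [Finset.card_range] at h
  have hmul : (m * n : ℤ) ≤ m * V.card := by
    exact (le_add_of_nonneg_right (Nat.cast_nonneg _)).trans h
  exact Nat.le_of_mul_le_mul_left (by exact_mod_cast hmul) hm

end SlotCounting

def spacedArcs (n m s K : ℕ) : Finset (Finset ℕ) :=
  (Finset.range m).image fun j => cycleArc n s (spacedStart n m K j)

section SpacedArcs

variable {n m s K : ℕ}

theorem card_mul_lt_of_subset_spacedArcs (hm : 0 < m) (hmn : m ≤ n) (hns : n ≤ (s - 1) * m)
    {F : Finset (Finset ℕ)} (hF : F ⊆ spacedArcs n m s K) (hF' : F ≠ spacedArcs n m s K)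
    {V : Finset ℕ} (hV : V.Nonempty) (hFV : ∀ e ∈ F, e ⊆ V) :
    F.card * n < m * V.card := by
  set T := (Finset.range m).filter fun j => cycleArc n s (spacedStart n m K j) ∈ F
  have hFT : F = T.image fun j => cycleArc n s (spacedStart n m K j) := by
    ext e
    constructor
    · intro he
      obtain ⟨j, hj, rfl⟩ := Finset.mem_image.mp (hF he)
      exact Finset.mem_image.mpr ⟨j, Finset.mem_filter.mpr ⟨hj, he⟩, rfl⟩
    · intro he
      obtain ⟨j, hj, rfl⟩ := Finset.mem_image.mp he
      exact (Finset.mem_filter.mp hj).2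
  have hT' : T ≠ Finset.range m := by
    intro h
    exact hF' (by rw [hFT, h, spacedArcs])
  have hlt := card_mul_lt_of_ne_range hm hmn hns (Finset.filter_subset _ _) hT' hV
    fun j hj => hFV _ (Finset.mem_filter.mp hj).2
  calc F.card * n ≤ T.card * n := by rw [hFT]; exact Nat.mul_le_mul_right _ Finset.card_image_le
    _ < m * V.card := hlt

theorem biUnion_spacedArcs (hm : 0 < m) (hmn : m ≤ n) (hns : n ≤ (s - 1) * m) :
    (spacedArcs n m s K).biUnion id = Finset.range n := by
  have hsub : (spacedArcs n m s K).biUnion id ⊆ Finset.range n := by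
    intro x hx
    obtain ⟨e, he, hxe⟩ := Finset.mem_biUnion.mp hx
    obtain ⟨j, -, rfl⟩ := Finset.mem_image.mp he
    obtain ⟨i, -, rfl⟩ := Finset.mem_image.mp hxe
    exact Finset.mem_range.mpr (Nat.mod_lt _ (by omega))
  refine Finset.eq_of_subset_of_card_le hsub ?_
  rw [Finset.card_range]
  exact le_card_of_forall_arc_subset hm hmn hns fun j hj =>
    Finset.subset_biUnion_of_mem id (Finset.mem_image_of_mem _ (Finset.mem_range.mpr hj))

theorem card_spacedArcs (hm : 0 < m) (hmn : m ≤ n) (hs : 0 < s) (hsn : s < n) :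
    (spacedArcs n m s K).card = m := by
  rw [spacedArcs, Finset.card_image_of_injOn (cycleArc_spacedStart_injOn hm hmn hs hsn),
    Finset.card_range]

end SpacedArcs

theorem SUHypergraph.strictlyBalanced_of_card_mul_lt {s : ℕ} (G : SUHypergraph s)
    (hV : G.V.Nonempty) (hcover : G.V ⊆ G.E.biUnion id)
    (hsparse : ∀ F ⊆ G.E, F ≠ G.E → ∀ V : Finset ℕ, V.Nonempty →
      (∀ e ∈ F, e ⊆ V) → F.card * G.V.card < G.E.card * V.card) :
    G.StrictlyBalanced := by
  refine ⟨hV, fun H hHV hHE hHne hproper => ?_⟩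
  have hF : H.E ≠ G.E := by
    intro hE
    refine hproper ⟨Finset.Subset.antisymm hHV fun v hv => ?_, hE⟩
    obtain ⟨e, he, hve⟩ := Finset.mem_biUnion.mp (hcover hv)
    exact H.edges_sub e (hE ▸ he) hve
  have := hsparse H.E hHE hF H.V hHne H.edges_sub
  rw [density, density, div_lt_div_iff₀ (by exact_mod_cast Finset.card_pos.mpr hHne)
    (by exact_mod_cast Finset.card_pos.mpr hV)]
  exact_mod_cast this

/-- the circular construction with `s ≥ 3`, `m ≥ 3`,
`n = (s-1)m - r`, `0 ≤ r < m` is strictly balanced with density `m/n`. -/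
theorem stmt7 (s m r n : ℕ) (hs : 3 ≤ s) (hm : 3 ≤ m) (hr : r < m)
    (hn : n = (s - 1) * m - r)
    (G : SUHypergraph s) (hV : G.V = Finset.range n)
    (hE : G.E = (Finset.range m).image (circEdge (Iset m r) s n)) :
    G.StrictlyBalanced ∧ G.density = (m : ℚ) / (n : ℚ) := by
  have hsm : (s - 1) * m = (s - 3) * m + 2 * m := by
    rw [← add_mul]; congr 1; omega
  have hnr : n + r = (s - 1) * m := by omega
  have hmn : m ≤ n := by omega
  have hns : n ≤ (s - 1) * m := by omega
  have hsn : s < n := by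
    have := Nat.mul_le_mul_left (s - 3) hm
    omega
  have hGE : G.E = spacedArcs n m s (m + 2 * n % m) := by
    rw [hE, spacedArcs]
    refine Finset.image_congr fun k hk => ?_
    simp only [circEdge, ← circStart_eq_spacedStart (by omega) hr hnr (Finset.mem_range.mp hk)]
    rfl
  have hGE_card : G.E.card = m := by
    rw [hGE, card_spacedArcs (by omega) hmn (by omega) hsn]
  have hGV_card : G.V.card = n := by rw [hV, Finset.card_range]
  refine ⟨G.strictlyBalanced_of_card_mul_lt ?_ ?_ ?_, ?_⟩
  · exact hV ▸ Finset.nonempty_range_iff.mpr (by omega)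
  · rw [hV, hGE, biUnion_spacedArcs (by omega) hmn hns]
  · intro F hF hF' V hVne hFV
    rw [hGE_card, hGV_card]
    exact card_mul_lt_of_subset_spacedArcs (by omega) hmn hns (hGE ▸ hF) (hGE ▸ hF') hVne hFV
  · rw [density, hGE_card, hGV_card]
end

section
/- Let α > 0 be irrational and let (R,H) be a minimally safe rooted s-uniform hypergraph of type (v,e) with v > 1. Then v − eα < 1. -/
open scoped Classical

open SUHypergraph

/-!
Write `f S` for the value `v - eα` of `(R, H|_S)`. It is additive along chains `R ⊆ S ⊆ T`, and
since `α` is irrational, `v - eα` never vanishes when `v > 0`, so a non-sparse extension is dense.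
For `R ⊊ S ⊊ V(H)`, minimality says `(S, H)` is not safe, which gives `S ⊊ T ⊆ V(H)` with
`(S, H|_T)` dense, i.e. `f T < f S`. Thus `f` strictly decreases on the way up to
`f V(H) = v - eα`, which is therefore below `f (R ∪ {u}) ≤ 1` for any non-root vertex `u`.
-/

open Finset

theorem Finset.card_filter_and_not_add {α : Type*} (X : Finset α) {p q r : α → Prop}
    [DecidablePred p] [DecidablePred q] [DecidablePred r]
    (hpq : ∀ x, p x → q x) (hqr : ∀ x, q x → r x) :
    #(X.filter fun x => r x ∧ ¬ p x) =
      #(X.filter fun x => q x ∧ ¬ p x) + #(X.filter fun x => r x ∧ ¬ q x) := by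
  rw [← card_filter_add_card_filter_not (s := X.filter fun x => r x ∧ ¬ p x) q,
    filter_filter, filter_filter]
  congr 2 <;> ext x <;> grind

theorem Finset.lt_of_forall_exists_ssuperset_lt {α β : Type*} [Preorder β] {R V : Finset α}
    (f : Finset α → β)
    (hstep : ∀ S, R ⊂ S → S ⊂ V → ∃ T, S ⊂ T ∧ T ⊆ V ∧ f T < f S)
    {S : Finset α} (hRS : R ⊂ S) (hSV : S ⊂ V) : f V < f S := by
  refine strongDownwardInduction (n := #V) (p := fun S => R ⊂ S → S ⊂ V → f V < f S)
    (fun S ih _ hRS hSV => ?_) S (card_le_card hSV.subset) hRS hSV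
  obtain ⟨T, hST, hTV, hlt⟩ := hstep S hRS hSV
  rcases hTV.eq_or_ssubset with rfl | hTV
  · exact hlt
  · exact (ih (card_le_card hTV.subset) hST (hRS.trans hST) hTV).trans hlt

namespace SUHypergraph

variable {s : ℕ} {α : ℝ}

theorem exVal_restrict_add (α : ℝ) (H : SUHypergraph s) {R S T : Finset ℕ}
    (hRS : R ⊆ S) (hST : S ⊆ T) :
    exVal α R (H.restrict T) = exVal α R (H.restrict S) + exVal α S (H.restrict T) := by
  have hV : ∀ A B : Finset ℕ, (H.V ∩ A) \ B = H.V.filter fun x => x ∈ A ∧ x ∉ B := by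
    intro A B; ext x; simp [and_assoc]
  simp only [exVal, restrict, hV, filter_filter]
  rw [H.V.card_filter_and_not_add (p := (· ∈ R)) (fun _ hx => hRS hx) (fun _ hx => hST hx),
    H.E.card_filter_and_not_add (p := (· ⊆ R)) (fun _ hf => hf.trans hRS)
      (fun _ hf => hf.trans hST)]
  push_cast
  ring

theorem exVal_restrict_self (α : ℝ) (R : Finset ℕ) (H : SUHypergraph s) :
    exVal α R (H.restrict H.V) = exVal α R H := by
  simp only [exVal, restrict, inter_self, filter_true_of_mem H.edges_sub]

theorem exVal_ne_zero (hirr : Irrational α) {S : Finset ℕ} {K : SUHypergraph s}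
    (hS : (K.V \ S).Nonempty) : exVal α S K ≠ 0 := by
  set a := #(K.V \ S)
  set b := #(K.E.filter fun f => ¬ f ⊆ S)
  intro h
  have heq : (a : ℝ) = b * α := by unfold exVal at h; linarith
  have hb : (b : ℝ) ≠ 0 := by
    intro hb
    rw [hb, zero_mul, Nat.cast_eq_zero, card_eq_zero] at heq
    exact hS.ne_empty heq
  exact hirr ⟨(a : ℚ) / b, by push_cast; rw [div_eq_iff hb, heq, mul_comm]⟩

theorem isDense_of_not_isSparse (hirr : Irrational α) {S : Finset ℕ} {K : SUHypergraph s}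
    (hS : (K.V \ S).Nonempty) (h : ¬ IsSparse α S K) : IsDense α S K :=
  (not_lt.mp h).lt_of_ne (exVal_ne_zero hirr hS)

theorem exVal_le_card_sdiff (hα : 0 ≤ α) (S : Finset ℕ) (K : SUHypergraph s) :
    exVal α S K ≤ #(K.V \ S) :=
  sub_le_self _ (by positivity)

theorem MinimallySafe.exists_ssuperset_exVal_lt (hirr : Irrational α) {R : Finset ℕ}
    {H : SUHypergraph s} (hms : MinimallySafe α R H) {S : Finset ℕ} (hRS : R ⊂ S)
    (hSV : S ⊂ H.V) :
    ∃ T, S ⊂ T ∧ T ⊆ H.V ∧ exVal α R (H.restrict T) < exVal α R (H.restrict S) := by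
  have hunsafe : ¬ Safe α S H := fun hsafe => hms.2 ⟨S, hRS, hSV, hsafe⟩
  simp only [Safe, not_forall] at hunsafe
  obtain ⟨T, hST, hTV, hsparse⟩ := hunsafe
  have hnew : ((H.restrict T).V \ S).Nonempty := by
    obtain ⟨x, hxT, hxS⟩ := exists_of_ssubset hST
    exact ⟨x, by simp [restrict, hTV hxT, hxT, hxS]⟩
  have hdense := isDense_of_not_isSparse hirr hnew hsparse
  refine ⟨T, hST, hTV, ?_⟩
  rw [exVal_restrict_add α H hRS.subset hST.subset]
  exact add_lt_of_neg_right _ hdense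

theorem MinimallySafe.exVal_lt_exVal_restrict (hirr : Irrational α) {R : Finset ℕ}
    {H : SUHypergraph s} (hms : MinimallySafe α R H) {S : Finset ℕ} (hRS : R ⊂ S)
    (hSV : S ⊂ H.V) : exVal α R H < exVal α R (H.restrict S) := by
  rw [← exVal_restrict_self]
  exact lt_of_forall_exists_ssuperset_lt (fun S => exVal α R (H.restrict S))
    (fun _ => hms.exists_ssuperset_exVal_lt hirr) hRS hSV

end SUHypergraph

theorem stmt13_general (s : ℕ) (α : ℝ) (hα : 0 < α) (hirr : Irrational α)
    (H : SUHypergraph s) (R : Finset ℕ) (hR : R ⊂ H.V)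
    (hms : MinimallySafe α R H)
    (hv : 1 < (H.V \ R).card) :
    ((H.V \ R).card : ℝ) - ((H.E.filter (fun f => ¬ f ⊆ R)).card : ℝ) * α < 1 := by
  obtain ⟨u, hu⟩ := card_pos.mp (by omega : 0 < #(H.V \ R))
  rw [mem_sdiff] at hu
  have hnew : insert u R \ R = {u} := by
    rw [insert_sdiff_of_notMem _ hu.2, Finset.sdiff_self, insert_empty]
  have huR : insert u R ⊂ H.V := by
    refine (insert_subset hu.1 hR.subset).ssubset_of_ne fun h => ?_
    rw [h] at hnew
    simp [hnew] at hv
  calc exVal α R H < exVal α R (H.restrict (insert u R)) :=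
        hms.exVal_lt_exVal_restrict hirr (ssubset_insert hu.2) huR
    _ ≤ #((H.restrict (insert u R)).V \ R) := exVal_le_card_sdiff hα.le _ _
    _ ≤ #(insert u R \ R) := by gcongr; exact inter_subset_right
    _ = 1 := by rw [hnew, card_singleton, Nat.cast_one]

/-- if `(R,H)` is minimally safe of type `(v,e)` with `v > 1`,
then `v - e·α < 1`. -/
theorem stmt13 (s : ℕ) (hs : 2 ≤ s) (α : ℝ) (hα : 0 < α) (hirr : Irrational α)
    (H : SUHypergraph s) (R : Finset ℕ) (hR : R ⊂ H.V)
    (hms : MinimallySafe α R H)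
    (hv : 1 < (H.V \ R).card) :
    ((H.V \ R).card : ℝ) - ((H.E.filter (fun f => ¬ f ⊆ R)).card : ℝ) * α < 1 :=
  stmt13_general s α hα hirr H R hR hms hv
end
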